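/- Let φ_on(d, t) be as in the Gaussian-source on-beam diffusion distribution. Its second derivative in d equals (Q0/(2πD d²))·((1 + 2d²/A)e^{−d²/A} − (1 + 2d²/B)e^{−d²/B}) with A = 2Ds + 4D(t − ti), B = 2Ds. It is strictly negative (φ_on concave in d) if d²/(2Ds) < 1/2, and strictly positive (φ_on convex in d) if d²/(2Ds + 4D(t − ti)) > 1/2. -/

import Mathlib

open Real MeasureTheory Set

/-- The exponential integral of order one. -/
noncomputable def E1 (v : ℝ) : ℝ := ∫ u in Set.Ioi v, u⁻¹ * Real.exp (-u)

/-- On-beam diffusion distribution as a function of the distance `d`. -/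
noncomputable def phiOn (Q0 D Ds ti t d : ℝ) : ℝ :=
  (Q0 / (4 * Real.pi * D)) *
    (E1 (d ^ 2 / (2 * Ds + 4 * D * (t - ti))) - E1 (d ^ 2 / (2 * Ds)))

open Topology

/-! Since `E1' v = -e^{-v} / v`, the chain rule gives `d/dx E1 (x²/A) = -(2/x) e^{-x²/A}`, whose
derivative is `(2/x²) F (x²/A)` with `F y = (1 + 2y) e^{-y}`. Hence `φ_on''` is a positive multiple
of `F (d²/A) - F (d²/B)` where `d²/A < d²/B`, and `F' y = (1 - 2y) e^{-y}` shows that `F` increases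
on `(-∞, 1/2]` and decreases on `[1/2, ∞)`, which gives both signs. -/

lemma integrableOn_inv_mul_exp_neg_Ioi {v : ℝ} (hv : 0 < v) :
    IntegrableOn (fun u : ℝ => u⁻¹ * exp (-u)) (Ioi v) := by
  have hexp : IntegrableOn (fun u : ℝ => exp (-u)) (Ioi v) := by
    simpa using exp_neg_integrableOn_Ioi v one_pos
  refine hexp.bdd_mul (c := v⁻¹) (by fun_prop) ?_
  filter_upwards [ae_restrict_mem measurableSet_Ioi] with u hu
  rw [norm_inv, Real.norm_of_nonneg (hv.trans hu).le]
  exact inv_anti₀ hv hu.le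

lemma hasDerivAt_E1 {v : ℝ} (hv : 0 < v) : HasDerivAt E1 (-(v⁻¹ * exp (-v))) v := by
  have hcont : ContinuousOn (fun u : ℝ => u⁻¹ * exp (-u)) (Ioi 0) := by
    intro u hu
    exact (continuousAt_inv₀ hu.ne' |>.mul (by fun_prop)).continuousWithinAt
  have hFTC : HasDerivAt (fun x => ∫ u in x..v, u⁻¹ * exp (-u)) (-(v⁻¹ * exp (-v))) v :=
    intervalIntegral.integral_hasDerivAt_left IntervalIntegrable.refl
      (hcont.stronglyMeasurableAtFilter isOpen_Ioi v hv) (hcont.continuousAt (Ioi_mem_nhds hv))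
  refine (hFTC.add_const (E1 v)).congr_of_eventuallyEq ?_
  filter_upwards [Ioi_mem_nhds hv] with x hx
  rw [← intervalIntegral.integral_Ioi_sub_Ioi' (integrableOn_inv_mul_exp_neg_Ioi hx)
    (integrableOn_inv_mul_exp_neg_Ioi hv), E1, E1, sub_add_cancel]

lemma hasDerivAt_E1_sq_div {A x : ℝ} (hA : 0 < A) (hx : x ≠ 0) :
    HasDerivAt (fun x => E1 (x ^ 2 / A)) (-(2 / x * exp (-(x ^ 2 / A)))) x := by
  have hsq : HasDerivAt (fun x : ℝ => x ^ 2 / A) (2 * x / A) x := by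
    simpa using (hasDerivAt_pow 2 x).div_const A
  refine ((hasDerivAt_E1 (by positivity)).comp x hsq).congr_deriv ?_
  field_simp

lemma hasDerivAt_neg_two_div_mul_exp_neg_sq_div {A x : ℝ} (hx : x ≠ 0) :
    HasDerivAt (fun x => -(2 / x * exp (-(x ^ 2 / A))))
      (2 / x ^ 2 * ((1 + 2 * (x ^ 2 / A)) * exp (-(x ^ 2 / A)))) x := by
  have hsq : HasDerivAt (fun x : ℝ => -(x ^ 2 / A)) (-(2 * x / A)) x := by
    simpa using ((hasDerivAt_pow 2 x).div_const A).fun_neg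
  refine (((hasDerivAt_inv hx).const_mul 2).mul hsq.exp).neg.congr_deriv ?_
  field_simp
  ring

lemma hasDerivAt_one_add_two_mul_mul_exp_neg (y : ℝ) :
    HasDerivAt (fun y : ℝ => (1 + 2 * y) * exp (-y)) ((1 - 2 * y) * exp (-y)) y := by
  have h := ((hasDerivAt_id' y).const_mul 2 |>.const_add 1).mul (hasDerivAt_neg y).exp
  exact h.congr_deriv (by ring)

lemma strictMonoOn_one_add_two_mul_mul_exp_neg :
    StrictMonoOn (fun y : ℝ => (1 + 2 * y) * exp (-y)) (Iic (1 / 2)) := by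
  refine strictMonoOn_of_deriv_pos (convex_Iic _) (by fun_prop) fun y hy => ?_
  rw [interior_Iic, mem_Iio] at hy
  rw [(hasDerivAt_one_add_two_mul_mul_exp_neg y).deriv]
  exact mul_pos (by linarith) (exp_pos _)

lemma strictAntiOn_one_add_two_mul_mul_exp_neg :
    StrictAntiOn (fun y : ℝ => (1 + 2 * y) * exp (-y)) (Ici (1 / 2)) := by
  refine strictAntiOn_of_deriv_neg (convex_Ici _) (by fun_prop) fun y hy => ?_
  rw [interior_Ici, mem_Ioi] at hy
  rw [(hasDerivAt_one_add_two_mul_mul_exp_neg y).deriv]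
  exact mul_neg_of_neg_of_pos (by linarith) (exp_pos _)

lemma deriv_deriv_const_mul_E1_sq_div_sub {c A B x : ℝ} (hA : 0 < A) (hB : 0 < B)
    (hx : x ≠ 0) :
    deriv (deriv fun x => c * (E1 (x ^ 2 / A) - E1 (x ^ 2 / B))) x =
      c * (2 / x ^ 2) * ((1 + 2 * (x ^ 2 / A)) * exp (-(x ^ 2 / A))
        - (1 + 2 * (x ^ 2 / B)) * exp (-(x ^ 2 / B))) := by
  have hfirst : deriv (fun x => c * (E1 (x ^ 2 / A) - E1 (x ^ 2 / B))) =ᶠ[𝓝 x]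
      fun x => c * (-(2 / x * exp (-(x ^ 2 / A))) - -(2 / x * exp (-(x ^ 2 / B)))) := by
    filter_upwards [isOpen_ne.mem_nhds hx] with y hy
    exact (((hasDerivAt_E1_sq_div hA hy).sub (hasDerivAt_E1_sq_div hB hy)).const_mul c).deriv
  rw [hfirst.deriv_eq, (((hasDerivAt_neg_two_div_mul_exp_neg_sq_div hx).fun_sub
    (hasDerivAt_neg_two_div_mul_exp_neg_sq_div hx)).const_mul c).deriv]
  ring

theorem phiOn_second_deriv (Q0 D Ds ti t : ℝ)
    (hQ : 0 < Q0) (hD : 0 < D) (hDs : 0 < Ds) (ht : ti < t) (d : ℝ) (hd : d ≠ 0) :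
    deriv (deriv (phiOn Q0 D Ds ti t)) d
      = (Q0 / (2 * Real.pi * D * d ^ 2)) *
          ((1 + 2 * d ^ 2 / (2 * Ds + 4 * D * (t - ti))) *
              Real.exp (-d ^ 2 / (2 * Ds + 4 * D * (t - ti)))
            - (1 + 2 * d ^ 2 / (2 * Ds)) * Real.exp (-d ^ 2 / (2 * Ds))) ∧
    (d ^ 2 / (2 * Ds) < 1 / 2 → deriv (deriv (phiOn Q0 D Ds ti t)) d < 0) ∧
    (1 / 2 < d ^ 2 / (2 * Ds + 4 * D * (t - ti)) →
      0 < deriv (deriv (phiOn Q0 D Ds ti t)) d) := by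
  set A := 2 * Ds + 4 * D * (t - ti)
  set B := 2 * Ds
  set F : ℝ → ℝ := fun y => (1 + 2 * y) * exp (-y)
  have hB : 0 < B := by positivity
  have hBA : B < A := by linarith [mul_pos hD (sub_pos.2 ht)]
  have hyA_lt_yB : d ^ 2 / A < d ^ 2 / B := div_lt_div_of_pos_left (by positivity) hB hBA
  have hsecond : deriv (deriv (phiOn Q0 D Ds ti t)) d
      = Q0 / (2 * π * D * d ^ 2) * (F (d ^ 2 / A) - F (d ^ 2 / B)) := by
    rw [show phiOn Q0 D Ds ti t = fun x => Q0 / (4 * π * D) * (E1 (x ^ 2 / A) - E1 (x ^ 2 / B))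
      from rfl, deriv_deriv_const_mul_E1_sq_div_sub (hB.trans hBA) hB hd]
    congr 1
    field_simp
    ring
  have hK : 0 < Q0 / (2 * π * D * d ^ 2) := by positivity
  refine ⟨?_, fun h => ?_, fun h => ?_⟩
  · simp only [hsecond, F, neg_div, mul_div_assoc]
  · rw [hsecond]
    refine mul_neg_of_pos_of_neg hK (sub_neg.2 ?_)
    exact strictMonoOn_one_add_two_mul_mul_exp_neg (hyA_lt_yB.trans h).le h.le hyA_lt_yB
  · rw [hsecond]
    refine mul_pos hK (sub_pos.2 ?_)
    exact strictAntiOn_one_add_two_mul_mul_exp_neg h.le (h.trans hyA_lt_yB).le hyA_lt_yB
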